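/- Let g be a metric on ℝⁿ. If g is log concave in the sense of Griffiths, i.e. for all u ∈ ℂ^r, v ∈ ℂⁿ one has Σ_{j,k} (Θ^g_{jk} u, u)_g v_j \bar{v}_k ≤ 0, then the inverse metric g⁻¹ is log convex in the sense of Griffiths, i.e. Σ_{j,k} (Θ^{g⁻¹}_{jk} u, u)_{g⁻¹} v_j \bar{v}_k ≥ 0 for all u ∈ ℂ^r, v ∈ ℂⁿ. -/

import Mathlib

open scoped ComplexOrder
open Matrix MeasureTheory

section Preamble

variable {ι : Type*} [Fintype ι] [DecidableEq ι] {r : ℕ}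

/-- Partial derivative of a complex-valued function on `ι → ℝ` in direction `j`. -/
noncomputable def pdC (j : ι) (f : (ι → ℝ) → ℂ) (x : ι → ℝ) : ℂ :=
  fderiv ℝ f x (Pi.single j 1)

/-- Partial derivative of a real-valued function on `ι → ℝ` in direction `j`. -/
noncomputable def pdR (j : ι) (f : (ι → ℝ) → ℝ) (x : ι → ℝ) : ℝ :=
  fderiv ℝ f x (Pi.single j 1)

/-- Entrywise partial derivative of a matrix-valued function. -/
noncomputable def mpd (j : ι) (g : (ι → ℝ) → Matrix (Fin r) (Fin r) ℂ) (x : ι → ℝ) :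
    Matrix (Fin r) (Fin r) ℂ :=
  Matrix.of fun a b => pdC j (fun y => g y a b) x

/-- The curvature-type quantity `Θ_{jk} = ∂_{x_k}(g⁻¹ ∂_{x_j} g)`. -/
noncomputable def Theta (g : (ι → ℝ) → Matrix (Fin r) (Fin r) ℂ) (j k : ι) (x : ι → ℝ) :
    Matrix (Fin r) (Fin r) ℂ :=
  mpd k (fun y => (g y)⁻¹ * mpd j g y) x

/-- The pairing `(u, v)_g = v* g u`. -/
noncomputable def ip (g : Matrix (Fin r) (Fin r) ℂ) (u v : Fin r → ℂ) : ℂ :=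
  star v ⬝ᵥ g.mulVec u

/-- A metric: twice differentiable entries, Hermitian positive definite values. -/
def IsMetric (g : (ι → ℝ) → Matrix (Fin r) (Fin r) ℂ) : Prop :=
  (∀ x, (g x).PosDef) ∧ ∀ a b, ContDiff ℝ 2 fun x => g x a b

/-- Log concavity in the sense of Nakano. -/
def NakanoLogConcave (g : (ι → ℝ) → Matrix (Fin r) (Fin r) ℂ) : Prop :=
  ∀ (x : ι → ℝ) (u : ι → Fin r → ℂ),
    ∑ j, ∑ k, ip (g x) ((Theta g j k x).mulVec (u j)) (u k) ≤ 0

/-- Log concavity in the sense of Griffiths. -/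
def GriffithsLogConcave (g : (ι → ℝ) → Matrix (Fin r) (Fin r) ℂ) : Prop :=
  ∀ (x : ι → ℝ) (u : Fin r → ℂ) (v : ι → ℂ),
    ∑ j, ∑ k, ip (g x) ((Theta g j k x).mulVec u) u * (v j * star (v k)) ≤ 0

end Preamble

/-! Differentiating `g g⁻¹ = 1` gives `∂ⱼ(g⁻¹) = -g⁻¹ (∂ⱼ g) g⁻¹`; together with the symmetry of
second derivatives this yields `Θ^{g⁻¹}_{jk} = -g Θ^g_{kj} g⁻¹`. Hence
`(Θ^{g⁻¹}_{jk} u, u)_{g⁻¹} = -(Θ^g_{kj} w, w)_g` with `w = g⁻¹ u`, so the Griffiths form of `g⁻¹`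
at `(u, v)` is minus the Griffiths form of `g` at `(w, v̄)`. -/

section PartialDerivative

variable {ι : Type*} [Fintype ι] [DecidableEq ι] {j : ι} {x : ι → ℝ}

lemma pdC_fun_sum {κ : Type*} {s : Finset κ} {f : κ → (ι → ℝ) → ℂ}
    (hf : ∀ i ∈ s, DifferentiableAt ℝ (f i) x) :
    pdC j (fun y => ∑ i ∈ s, f i y) x = ∑ i ∈ s, pdC j (f i) x := by
  simp [pdC, fderiv_fun_sum hf]

lemma pdC_fun_mul {f h : (ι → ℝ) → ℂ} (hf : DifferentiableAt ℝ f x)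
    (hh : DifferentiableAt ℝ h x) :
    pdC j (fun y => f y * h y) x = pdC j f x * h x + f x * pdC j h x := by
  simp only [pdC, fderiv_fun_mul hf hh, _root_.add_apply, _root_.smul_apply, smul_eq_mul]
  ring

lemma pdC_fun_neg {f : (ι → ℝ) → ℂ} : pdC j (fun y => -f y) x = -pdC j f x := by
  simp [pdC, fderiv_fun_neg]

lemma ContDiff.pdC {f : (ι → ℝ) → ℂ} (hf : ContDiff ℝ 2 f) (j : ι) :
    ContDiff ℝ 1 (pdC j f) :=
  (hf.fderiv_right (m := 1) (by norm_num)).clm_apply contDiff_const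

lemma pdC_comm {f : (ι → ℝ) → ℂ} (hf : ContDiff ℝ 2 f) (j k : ι) :
    pdC k (pdC j f) x = pdC j (pdC k f) x := by
  have hd : DifferentiableAt ℝ (fderiv ℝ f) x :=
    (hf.fderiv_right (m := 1) (by norm_num)).differentiable one_ne_zero x
  have hsecond : ∀ a b : ι,
      pdC b (pdC a f) x = fderiv ℝ (fderiv ℝ f) x (Pi.single b 1) (Pi.single a 1) := by
    intro a b
    change fderiv ℝ (fun y => fderiv ℝ f y (Pi.single a 1)) x (Pi.single b 1) = _
    simp [fderiv_clm_apply hd (differentiableAt_const _)]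
  rw [hsecond, hsecond, hf.contDiffAt.isSymmSndFDerivAt (by simp)]

end PartialDerivative

section DeterminantInverse

variable {E : Type*} [NormedAddCommGroup E] [NormedSpace ℝ E] {x : E}
  {m : Type*} [Fintype m] [DecidableEq m]

lemma differentiableAt_det {M : E → Matrix m m ℂ}
    (hM : ∀ a b, DifferentiableAt ℝ (fun y => M y a b) x) :
    DifferentiableAt ℝ (fun y => (M y).det) x := by
  simp only [det_apply']
  exact .fun_sum fun σ _ => (differentiableAt_const _).mul
    (HasFDerivAt.finsetProd fun i _ => (hM (σ i) i).hasFDerivAt).differentiableAt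

lemma differentiableAt_inv_apply {M : E → Matrix m m ℂ}
    (hM : ∀ a b, DifferentiableAt ℝ (fun y => M y a b) x) (hdet : (M x).det ≠ 0) (a b : m) :
    DifferentiableAt ℝ (fun y => (M y)⁻¹ a b) x := by
  have hadj : DifferentiableAt ℝ (fun y => (M y).adjugate a b) x := by
    simp only [adjugate_apply]
    refine differentiableAt_det fun c d => ?_
    by_cases hc : c = b
    · simp [updateRow_apply, hc]
    · simpa [updateRow_apply, hc] using hM c d
  have hinv : (fun y => (M y)⁻¹ a b) = fun y => ((M y).det)⁻¹ * (M y).adjugate a b := by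
    funext y
    rw [inv_def, Matrix.smul_apply, Ring.inverse_eq_inv, smul_eq_mul]
  rw [hinv]
  exact ((differentiableAt_det hM).inv hdet).mul hadj

end DeterminantInverse

section MatrixPartialDerivative

variable {ι : Type*} [Fintype ι] [DecidableEq ι] {r : ℕ} {j : ι} {x : ι → ℝ}

lemma mpd_fun_mul {A B : (ι → ℝ) → Matrix (Fin r) (Fin r) ℂ}
    (hA : ∀ a b, DifferentiableAt ℝ (fun y => A y a b) x)
    (hB : ∀ a b, DifferentiableAt ℝ (fun y => B y a b) x) :
    mpd j (fun y => A y * B y) x = mpd j A x * B x + A x * mpd j B x := by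
  ext a b
  simp only [mpd, of_apply, Matrix.add_apply, mul_apply]
  rw [pdC_fun_sum fun c _ => (hA a c).fun_mul (hB c b), ← Finset.sum_add_distrib]
  exact Finset.sum_congr rfl fun c _ => pdC_fun_mul (hA a c) (hB c b)

lemma mpd_fun_neg {A : (ι → ℝ) → Matrix (Fin r) (Fin r) ℂ} :
    mpd j (fun y => -A y) x = -mpd j A x := by
  ext a b
  exact pdC_fun_neg

lemma mpd_comm {A : (ι → ℝ) → Matrix (Fin r) (Fin r) ℂ}
    (hA : ∀ a b, ContDiff ℝ 2 fun y => A y a b) (j k : ι) :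
    mpd k (mpd j A) x = mpd j (mpd k A) x := by
  ext a b
  exact pdC_comm (hA a b) j k

lemma mpd_inv {M : (ι → ℝ) → Matrix (Fin r) (Fin r) ℂ}
    (hM : ∀ a b, DifferentiableAt ℝ (fun y => M y a b) x) (hU : ∀ y, IsUnit (M y).det) :
    mpd j (fun y => (M y)⁻¹) x = -((M x)⁻¹ * mpd j M x * (M x)⁻¹) := by
  have hMinv := differentiableAt_inv_apply hM (hU x).ne_zero
  have hprod : M x * mpd j (fun y => (M y)⁻¹) x + mpd j M x * (M x)⁻¹ = 0 := by
    rw [add_comm, ← mpd_fun_mul hM hMinv]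
    simp_rw [mul_nonsing_inv _ (hU _)]
    ext
    simp [mpd, pdC]
  calc mpd j (fun y => (M y)⁻¹) x
      = (M x)⁻¹ * (M x * mpd j (fun y => (M y)⁻¹) x) := by
        rw [← Matrix.mul_assoc, nonsing_inv_mul _ (hU x), Matrix.one_mul]
    _ = -((M x)⁻¹ * mpd j M x * (M x)⁻¹) := by
        rw [eq_neg_of_add_eq_zero_left hprod, Matrix.mul_neg, Matrix.mul_assoc]

end MatrixPartialDerivative

theorem Theta_inv {ι : Type*} [Fintype ι] [DecidableEq ι] {r : ℕ}
    {g : (ι → ℝ) → Matrix (Fin r) (Fin r) ℂ}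
    (hU : ∀ y, IsUnit (g y).det) (hC : ∀ a b, ContDiff ℝ 2 fun y => g y a b)
    (j k : ι) (x : ι → ℝ) :
    Theta (fun y => (g y)⁻¹) j k x = -(g x * Theta g k j x * (g x)⁻¹) := by
  have hg : ∀ a b, DifferentiableAt ℝ (fun y => g y a b) x :=
    fun a b => (hC a b).differentiable two_ne_zero x
  have hdg : ∀ i a b, DifferentiableAt ℝ (fun y => mpd i g y a b) x :=
    fun i a b => ((hC a b).pdC i).differentiable one_ne_zero x
  have hginv := differentiableAt_inv_apply hg (hU x).ne_zero
  have hmpd_inv : ∀ i y, mpd i (fun z => (g z)⁻¹) y = -((g y)⁻¹ * mpd i g y * (g y)⁻¹) :=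
    fun i y => mpd_inv (fun a b => (hC a b).differentiable two_ne_zero y) hU
  have hlog : (fun y => ((g y)⁻¹)⁻¹ * mpd j (fun z => (g z)⁻¹) y)
      = fun y => -(mpd j g y * (g y)⁻¹) := by
    funext y
    rw [nonsing_inv_nonsing_inv _ (hU y), hmpd_inv, Matrix.mul_neg, ← Matrix.mul_assoc,
      ← Matrix.mul_assoc, mul_nonsing_inv _ (hU y), Matrix.one_mul]
  have hlhs : Theta (fun y => (g y)⁻¹) j k x
      = -(mpd k (mpd j g) x * (g x)⁻¹ + mpd j g x * -((g x)⁻¹ * mpd k g x * (g x)⁻¹)) := by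
    rw [Theta, hlog, mpd_fun_neg, mpd_fun_mul (hdg j) hginv, hmpd_inv]
  have hrhs : Theta g k j x
      = -((g x)⁻¹ * mpd j g x * (g x)⁻¹) * mpd k g x + (g x)⁻¹ * mpd j (mpd k g) x := by
    rw [Theta, mpd_fun_mul hginv (hdg k), hmpd_inv]
  have hcancel : ∀ X : Matrix (Fin r) (Fin r) ℂ, g x * ((g x)⁻¹ * X) = X := fun X => by
    rw [← Matrix.mul_assoc, mul_nonsing_inv _ (hU x), Matrix.one_mul]
  rw [hlhs, hrhs, mpd_comm hC]
  simp only [Matrix.neg_mul, Matrix.mul_neg, Matrix.mul_add, Matrix.add_mul, Matrix.mul_assoc,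
    neg_add_rev, neg_neg, hcancel]
  abel

lemma ip_conj_nonsing_inv {r : ℕ} {G : Matrix (Fin r) (Fin r) ℂ} (hG : G.IsHermitian)
    (hU : IsUnit G.det) (T : Matrix (Fin r) (Fin r) ℂ) (u : Fin r → ℂ) :
    ip G⁻¹ ((G * T * G⁻¹) *ᵥ u) u = ip G (T *ᵥ (G⁻¹ *ᵥ u)) (G⁻¹ *ᵥ u) := by
  set w := G⁻¹ *ᵥ u
  have hu : G *ᵥ w = u := by
    rw [mulVec_mulVec, mul_nonsing_inv _ hU, one_mulVec]
  have hw : star w ᵥ* G = star u := by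
    conv_rhs => rw [← hu, star_mulVec, hG.eq]
  have hcancel : ∀ z, G⁻¹ *ᵥ (G *ᵥ z) = z := fun z => by
    rw [mulVec_mulVec, nonsing_inv_mul _ hU, one_mulVec]
  rw [ip, ip, ← mulVec_mulVec, ← mulVec_mulVec, hcancel, dotProduct_mulVec (star w) G, hw]

lemma ip_neg {r : ℕ} (G : Matrix (Fin r) (Fin r) ℂ) (u v : Fin r → ℂ) :
    ip G (-u) v = -ip G u v := by
  rw [ip, ip, mulVec_neg, dotProduct_neg]

theorem statement3 {n r : ℕ} (g : (Fin n → ℝ) → Matrix (Fin r) (Fin r) ℂ)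
    (hg : IsMetric g) (hconc : GriffithsLogConcave g) :
    ∀ (x : Fin n → ℝ) (u : Fin r → ℂ) (v : Fin n → ℂ),
      0 ≤ ∑ j, ∑ k,
        ip ((g x)⁻¹) ((Theta (fun y => (g y)⁻¹) j k x).mulVec u) u * (v j * star (v k)) := by
  intro x u v
  obtain ⟨hpd, hC⟩ := hg
  have hU : ∀ y, IsUnit (g y).det := fun y => (hpd y).det_pos.ne'.isUnit
  set w := (g x)⁻¹ *ᵥ u
  have hterm : ∀ j k, ip (g x)⁻¹ (Theta (fun y => (g y)⁻¹) j k x *ᵥ u) u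
      = -ip (g x) (Theta g k j x *ᵥ w) w := fun j k => by
    rw [Theta_inv hU hC, neg_mulVec, ip_neg, ip_conj_nonsing_inv (hpd x).isHermitian (hU x)]
  calc (0 : ℂ)
      ≤ -∑ k, ∑ j, ip (g x) (Theta g k j x *ᵥ w) w * (star v k * star (star v j)) :=
        neg_nonneg.2 (hconc x w (star v))
    _ = _ := by
        rw [Finset.sum_comm]
        simp only [hterm, star_star, Pi.star_apply, Finset.sum_neg_distrib, neg_mul, mul_comm]
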